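/- The upstream Moskowitz solution restricted to the upstream boundary, M_{M_k}(t, ζ), viewed as a function of the initial density ρ(k) ∈ [0, ρ_m] (with all other densities ρ(i), i ≠ k, fixed), is non-increasing in ρ(k) and piecewise linear: it equals the constant f₁(ρ(k)) = −Σ_{i<k} ρ(i)·X + ρ_c·(t·v_f + (k−1)X − ζ) when ρ(k) ≤ ρ_c, and equals the affine decreasing function of ρ(k) given in equation (37) when ρ(k) ≥ ρ_c, and these agree at ρ(k) = ρ_c. -/

import Mathlib

/-!
The free-flow branch does not depend on `ρ(k)`, and the congested branch is affine in `ρ(k)` with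
slope `t w + (k-1)X - ζ`, which is nonpositive because `t` is past the time `(ζ - (k-1)X)/w` at
which the backward characteristic reaches `ζ`. The two branches meet at `ρ_c`, the density where
the free-flow and congested fluxes `v_f ρ` and `w (ρ - ρ_m)` of the triangular fundamental diagram
coincide. Hence the piecewise function is `min f₁ f₂`, a minimum of antitone functions.
-/

theorem triangular_critical_density_flux_eq {vf w : ℝ} (h : vf - w ≠ 0) (ρm : ℝ) :
    -w * ρm / (vf - w) * vf = w * (-w * ρm / (vf - w) - ρm) := by
  field_simp
  ring

theorem ite_le_eq_min_of_antitone {α β : Type*} [LinearOrder α] [LinearOrder β] {g : α → β}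
    (hg : Antitone g) {c : α} {a : β} (hc : g c = a) (r : α) :
    (if r ≤ c then a else g r) = min a (g r) := by
  split_ifs with hr
  · exact (min_eq_left (hc ▸ hg hr)).symm
  · exact (min_eq_right (hc ▸ hg (le_of_not_ge hr))).symm

theorem upstream_moskowitz_antitone_in_density_general (vf w X ρm ρc ζ t : ℝ) (k : ℕ)
    (ρinit : ℕ → ℝ)
    (hvf : 0 < vf) (hw : w < 0)
    (hρc : ρc = -w * ρm / (vf - w))
    (ht : (ζ - ((k : ℝ) - 1) * X) / w ≤ t) :
    let f1 : ℝ := -(∑ i ∈ Finset.Icc 1 (k - 1), ρinit i * X) +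
      ρc * (t * vf + ((k : ℝ) - 1) * X - ζ)
    let f2 : ℝ → ℝ := fun r => -(∑ i ∈ Finset.Icc 1 (k - 1), ρinit i * X) +
      r * (t * w + ((k : ℝ) - 1) * X - ζ) - ρm * t * w
    let M : ℝ → ℝ := fun r => if r ≤ ρc then f1 else f2 r
    AntitoneOn M (Set.Icc 0 ρm) ∧
    f1 = f2 ρc ∧
    (∀ r ∈ Set.Icc (0 : ℝ) ρm, r ≤ ρc → M r = f1) ∧
    (∀ r ∈ Set.Icc (0 : ℝ) ρm, ρc ≤ r → M r = f2 r) := by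
  intro f1 f2 M
  have hflux : ρc * vf = w * (ρc - ρm) :=
    hρc ▸ triangular_critical_density_flux_eq (by linarith) ρm
  have hslope : t * w + ((k : ℝ) - 1) * X - ζ ≤ 0 := by
    rw [div_le_iff_of_neg hw] at ht
    linarith
  have hf2 : Antitone f2 := fun a b hab => by
    have := mul_le_mul_of_nonpos_right hab hslope
    simp only [f2]
    linarith
  have hmeet : f1 = f2 ρc := by
    simp only [f1, f2]
    linear_combination t * hflux
  have hM : M = fun r => min f1 (f2 r) := funext (ite_le_eq_min_of_antitone hf2 hmeet.symm)
  refine ⟨?_, hmeet, fun r _ hr => if_pos hr, fun r _ hr => ?_⟩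
  · rw [hM]
    exact (antitone_const.min hf2).antitoneOn _
  · rw [hM]
    exact min_eq_right (hmeet ▸ hf2 hr)

/-- The upstream Moskowitz solution `M_{M_k}(t, ζ)` (equation (37)), viewed as a
function of the initial density `ρ(k) ∈ [0, ρ_m]` with the other densities
fixed, is non-increasing and piecewise linear: it equals the constant
`f₁ = -∑_{i<k} ρ(i) X + ρ_c (t v_f + (k-1)X - ζ)` when `ρ(k) ≤ ρ_c`, equals the
affine function `f₂(r) = -∑_{i<k} ρ(i) X + r (t w + (k-1)X - ζ) - ρ_m t w` when
`ρ(k) ≥ ρ_c`, and the two pieces agree at `ρ(k) = ρ_c`. -/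
theorem upstream_moskowitz_antitone_in_density (vf w X ρm ρc ζ t : ℝ) (k : ℕ)
    (ρinit : ℕ → ℝ)
    (hvf : 0 < vf) (hw : w < 0) (hX : 0 < X) (hρm : 0 < ρm)
    (hρc : ρc = -w * ρm / (vf - w)) (hρc0 : 0 < ρc) (hρcm : ρc < ρm)
    (hk : 1 ≤ k) (hζ : ζ ≤ ((k : ℝ) - 1) * X)
    (ht : (ζ - ((k : ℝ) - 1) * X) / w ≤ t) :
    let f1 : ℝ := -(∑ i ∈ Finset.Icc 1 (k - 1), ρinit i * X) +
      ρc * (t * vf + ((k : ℝ) - 1) * X - ζ)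
    let f2 : ℝ → ℝ := fun r => -(∑ i ∈ Finset.Icc 1 (k - 1), ρinit i * X) +
      r * (t * w + ((k : ℝ) - 1) * X - ζ) - ρm * t * w
    let M : ℝ → ℝ := fun r => if r ≤ ρc then f1 else f2 r
    AntitoneOn M (Set.Icc 0 ρm) ∧
    f1 = f2 ρc ∧
    (∀ r ∈ Set.Icc (0 : ℝ) ρm, r ≤ ρc → M r = f1) ∧
    (∀ r ∈ Set.Icc (0 : ℝ) ρm, ρc ≤ r → M r = f2 r) :=
  upstream_moskowitz_antitone_in_density_general vf w X ρm ρc ζ t k ρinit hvf hw hρc ht
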